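/- arXiv:2505.02562 — 2 statements merged into one kernel-verified Lean document; each statement's English description precedes it below -/
import Mathlib

section
/- Let F and F₁ be positive definite symmetric matrices and D a positive definite symmetric matrix with D² ≤ κ²F (in the Loewner order) for some κ > 0. If ‖D⁻¹(F₁ - F)D⁻¹‖ ≤ κ⁻²δ with δ < 1, then ‖F^{-1/2}(F₁ - F)F^{-1/2}‖ ≤ δ. -/
/-!
Put `S = F^{1/2}` and `B = D S⁻¹`. Conjugating `D² ≤ κ² F` by `S⁻¹` gives `Bᴴ B ≤ κ²`, i.e.
`‖B‖ ≤ κ`, and `S⁻¹ (F₁ - F) S⁻¹ = Bᴴ (D⁻¹ (F₁ - F) D⁻¹) B`, so submultiplicativity of the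
operator norm bounds the left side by `κ² · κ⁻² δ = δ`.
-/

open scoped Matrix.Norms.L2Operator RealInnerProductSpace
open Matrix

namespace Matrix.PosSemidef

open scoped ComplexOrder

noncomputable def sqrt {n 𝕜 : Type*} [Fintype n] [RCLike 𝕜] [DecidableEq n]
    {A : Matrix n n 𝕜} (hA : A.PosSemidef) : Matrix n n 𝕜 :=
  hA.1.eigenvectorUnitary.1 * diagonal ((↑) ∘ (√·) ∘ hA.1.eigenvalues) *
  (star hA.1.eigenvectorUnitary : Matrix n n 𝕜)

end Matrix.PosSemidef

noncomputable def vnorm {p : ℕ} (v : Fin p → ℝ) : ℝ :=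
  ‖(WithLp.equiv 2 (Fin p → ℝ)).symm v‖

namespace Matrix.PosSemidef

open scoped ComplexOrder

variable {n 𝕜 : Type*} [Fintype n] [RCLike 𝕜] [DecidableEq n] {A : Matrix n n 𝕜}

lemma posSemidef_sqrt (hA : A.PosSemidef) : hA.sqrt.PosSemidef :=
  (PosSemidef.diagonal fun i => by simp [Real.sqrt_nonneg]).mul_mul_conjTranspose_same _

lemma sqrt_mul_self (hA : A.PosSemidef) : hA.sqrt * hA.sqrt = A := by
  conv_rhs => rw [hA.1.spectral_theorem, Unitary.conjStarAlgAut_apply]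
  have hU : (star hA.1.eigenvectorUnitary : Matrix n n 𝕜) * hA.1.eigenvectorUnitary = 1 := by simp
  simp only [sqrt, Matrix.mul_assoc]
  rw [← Matrix.mul_assoc (star _ : Matrix n n 𝕜), hU, Matrix.one_mul,
    ← Matrix.mul_assoc (diagonal _), diagonal_mul_diagonal]
  congr 3
  funext i
  simp [← RCLike.ofReal_mul, Real.mul_self_sqrt (hA.eigenvalues_nonneg i)]

end Matrix.PosSemidef

namespace Matrix

variable {m n : Type*} [Fintype m] [Fintype n] [DecidableEq n]

omit [DecidableEq n] in
lemma norm_toLp_sq_eq_dotProduct (v : n → ℝ) : ‖WithLp.toLp 2 v‖ ^ 2 = v ⬝ᵥ v := by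
  rw [← real_inner_self_eq_norm_sq, EuclideanSpace.inner_toLp_toLp]
  simp [dotProduct]

lemma l2_opNorm_le_of_posSemidef_sub_conjTranspose_mul_self {B : Matrix m n ℝ} {c : ℝ}
    (hc : 0 ≤ c) (h : (c ^ 2 • (1 : Matrix n n ℝ) - Bᴴ * B).PosSemidef) : ‖B‖ ≤ c := by
  rw [l2_opNorm_def]
  refine ContinuousLinearMap.opNorm_le_bound _ hc fun x => le_of_sq_le_sq ?_ (by positivity)
  have hx := h.dotProduct_mulVec_nonneg x.ofLp
  rw [star_trivial, sub_mulVec, dotProduct_sub, ← mulVec_mulVec,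
    conjTranspose_eq_transpose_of_trivial, dotProduct_mulVec _ Bᵀ, vecMul_transpose, smul_mulVec,
    one_mulVec, dotProduct_smul, smul_eq_mul, sub_nonneg, ← norm_toLp_sq_eq_dotProduct,
    ← norm_toLp_sq_eq_dotProduct] at hx
  rw [mul_pow]
  exact hx

lemma l2_opNorm_inv_mul_mul_inv_le {S D X : Matrix n n ℝ} {κ : ℝ} (hκ : 0 ≤ κ)
    (hS : S.IsHermitian) (hSdet : IsUnit S.det) (hD : D.IsHermitian) (hDdet : IsUnit D.det)
    (hL : (κ ^ 2 • (S * S) - D ^ 2).PosSemidef) :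
    ‖S⁻¹ * X * S⁻¹‖ ≤ κ ^ 2 * ‖D⁻¹ * X * D⁻¹‖ := by
  set B := D * S⁻¹
  have hBH : Bᴴ = S⁻¹ * D := by
    rw [conjTranspose_mul, conjTranspose_nonsing_inv, hS.eq, hD.eq]
  have hX : S⁻¹ * X * S⁻¹ = Bᴴ * (D⁻¹ * X * D⁻¹) * B := by
    simp only [hBH, B, Matrix.mul_assoc, mul_nonsing_inv_cancel_left _ _ hDdet,
      nonsing_inv_mul_cancel_left _ _ hDdet]
  have hBB : κ ^ 2 • 1 - Bᴴ * B = (S⁻¹)ᴴ * (κ ^ 2 • (S * S) - D ^ 2) * S⁻¹ := by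
    have hSSS : S⁻¹ * (S * S) * S⁻¹ = 1 := by
      rw [← Matrix.mul_assoc, nonsing_inv_mul _ hSdet, Matrix.one_mul, mul_nonsing_inv _ hSdet]
    rw [conjTranspose_nonsing_inv, hS.eq, hBH, Matrix.mul_sub, Matrix.sub_mul, Matrix.mul_smul,
      Matrix.smul_mul, hSSS, sq D]
    simp only [B, Matrix.mul_assoc]
  have hB : ‖B‖ ≤ κ :=
    l2_opNorm_le_of_posSemidef_sub_conjTranspose_mul_self hκ (hBB ▸ hL.conjTranspose_mul_mul_same _)
  calc ‖S⁻¹ * X * S⁻¹‖ ≤ ‖Bᴴ‖ * ‖D⁻¹ * X * D⁻¹‖ * ‖B‖ := by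
        rw [hX]
        exact (l2_opNorm_mul _ _).trans (by gcongr; exact l2_opNorm_mul _ _)
    _ ≤ κ * ‖D⁻¹ * X * D⁻¹‖ * κ := by rw [l2_opNorm_conjTranspose]; gcongr
    _ = κ ^ 2 * ‖D⁻¹ * X * D⁻¹‖ := by ring

end Matrix

theorem stmt_1_general {p : ℕ} (F F₁ D : Matrix (Fin p) (Fin p) ℝ)
    (hF : F.PosDef) (hD : D.PosDef) (κ δ : ℝ) (hκ : 0 < κ)
    (hLoewner : (κ ^ 2 • F - D ^ 2).PosSemidef)
    (h : ‖D⁻¹ * (F₁ - F) * D⁻¹‖ ≤ κ⁻¹ ^ 2 * δ) :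
    ‖(hF.posSemidef.sqrt)⁻¹ * (F₁ - F) * (hF.posSemidef.sqrt)⁻¹‖ ≤ δ := by
  set S := hF.posSemidef.sqrt
  have hSS : S * S = F := hF.posSemidef.sqrt_mul_self
  have hSdet : IsUnit S.det :=
    isUnit_of_mul_isUnit_left (y := S.det) <| by
      rw [← det_mul, hSS]; exact hF.isUnit.map detMonoidHom
  calc ‖S⁻¹ * (F₁ - F) * S⁻¹‖ ≤ κ ^ 2 * ‖D⁻¹ * (F₁ - F) * D⁻¹‖ :=
        l2_opNorm_inv_mul_mul_inv_le hκ.le hF.posSemidef.posSemidef_sqrt.isHermitian hSdet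
          hD.isHermitian (hD.isUnit.map detMonoidHom) (hSS ▸ hLoewner)
    _ ≤ κ ^ 2 * (κ⁻¹ ^ 2 * δ) := by gcongr
    _ = δ := by field_simp

theorem stmt_1 {p : ℕ} (F F₁ D : Matrix (Fin p) (Fin p) ℝ)
    (hF : F.PosDef) (hF₁ : F₁.PosDef) (hD : D.PosDef) (κ δ : ℝ) (hκ : 0 < κ)
    (hLoewner : (κ ^ 2 • F - D ^ 2).PosSemidef) (hδ : δ < 1)
    (h : ‖D⁻¹ * (F₁ - F) * D⁻¹‖ ≤ κ⁻¹ ^ 2 * δ) :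
    ‖(hF.posSemidef.sqrt)⁻¹ * (F₁ - F) * (hF.posSemidef.sqrt)⁻¹‖ ≤ δ :=
  stmt_1_general F F₁ D hF hD κ δ hκ hLoewner h
end

section
/- Let F, F₁ be positive definite symmetric matrices and D a positive definite symmetric matrix with D² ≤ F (Loewner order) and ‖D⁻¹(F₁ - F)D⁻¹‖ ≤ δ < 1. Then for any vector u, (1 - δ)‖D⁻¹ F u‖ ≤ ‖D⁻¹ F₁ u‖ ≤ (1 + δ)‖D⁻¹ F u‖. -/
/-!
Since `D` is symmetric and invertible, `‖D u‖² = ⟪u, D² u⟫ ≤ ⟪u, F u⟫ = ⟪D u, D⁻¹ F u⟫`, so Cauchy–Schwarz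
gives `‖D u‖ ≤ ‖D⁻¹ F u‖`. Writing `D⁻¹ F₁ u - D⁻¹ F u = (D⁻¹ (F₁ - F) D⁻¹)(D u)`, the difference has norm
at most `δ ‖D u‖ ≤ δ ‖D⁻¹ F u‖`, and the two bounds follow from the triangle inequality.
-/

open scoped Matrix.Norms.L2Operator RealInnerProductSpace
open Matrix

theorem norm_bounds_of_norm_sub_le {E : Type*} [SeminormedAddCommGroup E] {v w : E} {δ : ℝ}
    (h : ‖w - v‖ ≤ δ * ‖v‖) : (1 - δ) * ‖v‖ ≤ ‖w‖ ∧ ‖w‖ ≤ (1 + δ) * ‖v‖ :=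
  ⟨by linarith [norm_le_norm_add_norm_sub w v], by linarith [norm_le_norm_add_norm_sub' w v]⟩

theorem vnorm_mul_self {p : ℕ} (v : Fin p → ℝ) : vnorm v * vnorm v = v ⬝ᵥ v := by
  rw [vnorm, ← real_inner_self_eq_norm_mul_norm, EuclideanSpace.inner_eq_star_dotProduct]
  rfl

theorem dotProduct_le_vnorm_mul_vnorm {p : ℕ} (v w : Fin p → ℝ) :
    v ⬝ᵥ w ≤ vnorm v * vnorm w := by
  have := real_inner_le_norm ((WithLp.equiv 2 (Fin p → ℝ)).symm w)
    ((WithLp.equiv 2 (Fin p → ℝ)).symm v)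
  rwa [EuclideanSpace.inner_eq_star_dotProduct, mul_comm] at this

theorem vnorm_mulVec_le {p : ℕ} (A : Matrix (Fin p) (Fin p) ℝ) (v : Fin p → ℝ) :
    vnorm (A *ᵥ v) ≤ ‖A‖ * vnorm v :=
  l2_opNorm_mulVec A ((WithLp.equiv 2 (Fin p → ℝ)).symm v)

theorem vnorm_mulVec_le_of_posSemidef_sub_sq {p : ℕ} {D F : Matrix (Fin p) (Fin p) ℝ}
    (hD : D.IsSymm) (hDu : IsUnit D) (hDF : (F - D ^ 2).PosSemidef) (u : Fin p → ℝ) :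
    vnorm (D *ᵥ u) ≤ vnorm (D⁻¹ *ᵥ F *ᵥ u) := by
  have hDD : D⁻¹ * D = 1 := nonsing_inv_mul D ((isUnit_iff_isUnit_det D).mp hDu)
  have hsq : (D *ᵥ u) ⬝ᵥ (D *ᵥ u) = u ⬝ᵥ (D ^ 2 *ᵥ u) := by
    rw [dotProduct_mulVec, ← mulVec_transpose, hD.eq, mulVec_mulVec, ← sq, dotProduct_comm]
  have hF : u ⬝ᵥ (F *ᵥ u) = (D *ᵥ u) ⬝ᵥ (D⁻¹ *ᵥ F *ᵥ u) := by
    rw [dotProduct_mulVec (D *ᵥ u), ← mulVec_transpose, transpose_nonsing_inv, hD.eq,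
      mulVec_mulVec, hDD, one_mulVec]
  have hquad : u ⬝ᵥ (D ^ 2 *ᵥ u) ≤ u ⬝ᵥ (F *ᵥ u) := by
    have := hDF.dotProduct_mulVec_nonneg u
    rw [star_trivial, sub_mulVec, dotProduct_sub] at this
    linarith
  have hcs : vnorm (D *ᵥ u) * vnorm (D *ᵥ u) ≤ vnorm (D *ᵥ u) * vnorm (D⁻¹ *ᵥ F *ᵥ u) := by
    rw [vnorm_mul_self, hsq]
    exact hquad.trans (hF ▸ dotProduct_le_vnorm_mul_vnorm _ _)
  have h0 : 0 ≤ vnorm (D *ᵥ u) := norm_nonneg _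
  have h1 : 0 ≤ vnorm (D⁻¹ *ᵥ F *ᵥ u) := norm_nonneg _
  nlinarith

theorem inv_mulVec_sub_inv_mulVec {n R : Type*} [Fintype n] [DecidableEq n] [CommRing R]
    {D : Matrix n n R} (hD : IsUnit D) (F F₁ : Matrix n n R) (u : n → R) :
    D⁻¹ *ᵥ F₁ *ᵥ u - D⁻¹ *ᵥ F *ᵥ u = (D⁻¹ * (F₁ - F) * D⁻¹) *ᵥ (D *ᵥ u) := by
  rw [mulVec_mulVec, mulVec_mulVec, mulVec_mulVec, Matrix.mul_assoc _ D⁻¹,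
    nonsing_inv_mul D ((isUnit_iff_isUnit_det D).mp hD), Matrix.mul_one, Matrix.mul_sub,
    sub_mulVec]

theorem stmt_4_general {p : ℕ} (F F₁ D : Matrix (Fin p) (Fin p) ℝ)
    (hD : D.PosDef)
    (hLoewner : (F - D ^ 2).PosSemidef)
    (δ : ℝ) (h : ‖D⁻¹ * (F₁ - F) * D⁻¹‖ ≤ δ) (u : Fin p → ℝ) :
    (1 - δ) * vnorm (D⁻¹ *ᵥ F *ᵥ u) ≤ vnorm (D⁻¹ *ᵥ F₁ *ᵥ u) ∧
      vnorm (D⁻¹ *ᵥ F₁ *ᵥ u) ≤ (1 + δ) * vnorm (D⁻¹ *ᵥ F *ᵥ u) := by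
  have hDsymm : D.IsSymm := isHermitian_iff_isSymm.mp hD.isHermitian
  have hDu : IsUnit D := hD.isUnit
  have hclose : vnorm (D⁻¹ *ᵥ F₁ *ᵥ u - D⁻¹ *ᵥ F *ᵥ u) ≤ δ * vnorm (D⁻¹ *ᵥ F *ᵥ u) := by
    rw [inv_mulVec_sub_inv_mulVec hDu]
    calc _ ≤ ‖D⁻¹ * (F₁ - F) * D⁻¹‖ * vnorm (D *ᵥ u) := vnorm_mulVec_le _ _
      _ ≤ δ * vnorm (D⁻¹ *ᵥ F *ᵥ u) :=
        mul_le_mul h (vnorm_mulVec_le_of_posSemidef_sub_sq hDsymm hDu hLoewner u)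
          (norm_nonneg _) ((norm_nonneg _).trans h)
  exact norm_bounds_of_norm_sub_le (by simpa [vnorm] using hclose)

theorem stmt_4 {p : ℕ} (F F₁ D : Matrix (Fin p) (Fin p) ℝ)
    (hF : F.PosDef) (hF₁ : F₁.PosDef) (hD : D.PosDef)
    (hLoewner : (F - D ^ 2).PosSemidef)
    (δ : ℝ) (hδ : δ < 1) (h : ‖D⁻¹ * (F₁ - F) * D⁻¹‖ ≤ δ) (u : Fin p → ℝ) :
    (1 - δ) * vnorm (D⁻¹ *ᵥ F *ᵥ u) ≤ vnorm (D⁻¹ *ᵥ F₁ *ᵥ u) ∧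
      vnorm (D⁻¹ *ᵥ F₁ *ᵥ u) ≤ (1 + δ) * vnorm (D⁻¹ *ᵥ F *ᵥ u) :=
  stmt_4_general F F₁ D hD hLoewner δ h u
end
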